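/- arXiv:1204.0551 — 9 statements merged into one kernel-verified Lean document; each statement's English description precedes it below -/
import Mathlib

section
/- Let X be a complex Banach space and A a strongly closed (i.e., closed in the strong operator topology) subalgebra of B(X) containing the identity operator. If b ∈ B(X) is such that for every n ∈ ℕ, every closed subspace of X^(n) invariant under the n-fold diagonal amplification a ⊕ a ⊕ ... ⊕ a of every a ∈ A is also invariant under b ⊕ b ⊕ ... ⊕ b, then b ∈ A. -/
/-!
Since the strong operator topology is the topology of pointwise convergence, `b` lies in the
strong closure of `A` as soon as, for every finite tuple `x = (x₁, …, xₙ)` in `X`, the tuple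
`(b x₁, …, b xₙ)` lies in the closure of the orbit `{(a x₁, …, a xₙ) : a ∈ A}`. That closure is a
closed subspace of `X^(n)` invariant under every amplification `a ⊕ ⋯ ⊕ a` with `a ∈ A`, and it
contains `x` because `1 ∈ A`; so by hypothesis it contains `(b x₁, …, b xₙ)`.
-/

open Filter Topology

theorem mem_closure_of_forall_comp_mem_closure {α β : Type*} [TopologicalSpace β]
    {S : Set (α → β)} {f : α → β}
    (h : ∀ (n : ℕ) (x : Fin n → α), f ∘ x ∈ closure ((fun g => g ∘ x) '' S)) :
    f ∈ closure S := by
  rw [mem_closure_iff]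
  intro s hs hfs
  obtain ⟨I, u, hu, hIu⟩ := isOpen_pi_iff.mp hs f hfs
  let x : Fin I.card → α := fun i => I.equivFin.symm i
  have hxI (i : Fin I.card) : x i ∈ I := (I.equivFin.symm i).2
  have hV : IsOpen (Set.univ.pi fun i => u (x i)) :=
    isOpen_set_pi Set.finite_univ fun i _ => (hu _ (hxI i)).1
  have hfV : f ∘ x ∈ Set.univ.pi fun i => u (x i) := fun i _ => (hu _ (hxI i)).2
  obtain ⟨_, hgV, g, hgS, rfl⟩ := mem_closure_iff.mp (h _ x) _ hV hfV
  refine ⟨g, hIu fun y hy => ?_, hgS⟩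
  simpa [x] using hgV (I.equivFin ⟨y, hy⟩) (Set.mem_univ _)

section AmplifiedOrbit

variable {R E ι : Type*} [CommRing R] [AddCommGroup E] [Module R E] [TopologicalSpace E]
  [IsTopologicalAddGroup E] [ContinuousConstSMul R E]

def evalTuple (x : ι → E) : (E →L[R] E) →ₗ[R] (ι → E) where
  toFun a i := a (x i)
  map_add' _ _ := rfl
  map_smul' _ _ := rfl

def amplifiedOrbit (A : Subalgebra R (E →L[R] E)) (x : ι → E) : Submodule R (ι → E) :=
  (Subalgebra.toSubmodule A).map (evalTuple x)

variable (A : Subalgebra R (E →L[R] E)) (x : ι → E)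

theorem coe_amplifiedOrbit :
    (amplifiedOrbit A x : Set (ι → E)) =
      (fun f => f ∘ x) '' ((fun a : E →L[R] E => (a : E → E)) '' (A : Set (E →L[R] E))) := by
  rw [amplifiedOrbit, Submodule.map_coe, Set.image_image]
  rfl

theorem self_mem_amplifiedOrbit : x ∈ amplifiedOrbit A x :=
  ⟨1, A.one_mem, rfl⟩

theorem amplify_mem_topologicalClosure_amplifiedOrbit {a : E →L[R] E} (ha : a ∈ A)
    {v : ι → E} (hv : v ∈ (amplifiedOrbit A x).topologicalClosure) :
    (fun i => a (v i)) ∈ (amplifiedOrbit A x).topologicalClosure := by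
  let T : (ι → E) →L[R] (ι → E) := ContinuousLinearMap.pi fun i => a.comp (.proj i)
  have hT : Set.MapsTo T (amplifiedOrbit A x) (amplifiedOrbit A x) := by
    rintro _ ⟨c, hc, rfl⟩
    exact ⟨a * c, A.mul_mem ha hc, rfl⟩
  rw [← SetLike.mem_coe, Submodule.topologicalClosure_coe] at hv ⊢
  exact map_mem_closure T.continuous hv hT

end AmplifiedOrbit

theorem stmt0_general {X : Type*} [NormedAddCommGroup X] [NormedSpace ℂ X]
    (A : Subalgebra ℂ (X →L[ℂ] X))
    (hA : IsClosed ((fun a : X →L[ℂ] X => (a : X → X)) '' (A : Set (X →L[ℂ] X))))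
    (b : X →L[ℂ] X)
    (hb : ∀ (n : ℕ) (K : Submodule ℂ (Fin n → X)), IsClosed (K : Set (Fin n → X)) →
      (∀ a ∈ A, ∀ v ∈ K, (fun i => a (v i)) ∈ K) →
      (∀ v ∈ K, (fun i => b (v i)) ∈ K)) :
    b ∈ A := by
  have hb_closure : (b : X → X) ∈ closure ((fun a : X →L[ℂ] X => (a : X → X)) '' A) := by
    refine mem_closure_of_forall_comp_mem_closure fun n x => ?_
    have hbx := hb n _ (amplifiedOrbit A x).isClosed_topologicalClosure
      (fun a ha v hv => amplify_mem_topologicalClosure_amplifiedOrbit A x ha hv) x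
      ((amplifiedOrbit A x).le_topologicalClosure (self_mem_amplifiedOrbit A x))
    rwa [← SetLike.mem_coe, Submodule.topologicalClosure_coe, coe_amplifiedOrbit] at hbx
  obtain ⟨a, ha, hab⟩ := hA.closure_subset hb_closure
  exact DFunLike.coe_injective hab ▸ ha

/-- If `A` is a strongly closed (SOT-closed) unital subalgebra of `B(X)`
(`X` a complex Banach space) and `b ∈ B(X)` is such that for every `n`, every closed
subspace of `X^(n)` invariant under the diagonal amplification of every `a ∈ A` is also
invariant under the amplification of `b`, then `b ∈ A`. -/
theorem stmt0 {X : Type*} [NormedAddCommGroup X] [NormedSpace ℂ X] [CompleteSpace X]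
    (A : Subalgebra ℂ (X →L[ℂ] X))
    (hA : IsClosed ((fun a : X →L[ℂ] X => (a : X → X)) '' (A : Set (X →L[ℂ] X))))
    (b : X →L[ℂ] X)
    (hb : ∀ (n : ℕ) (K : Submodule ℂ (Fin n → X)), IsClosed (K : Set (Fin n → X)) →
      (∀ a ∈ A, ∀ v ∈ K, (fun i => a (v i)) ∈ K) →
      (∀ v ∈ K, (fun i => b (v i)) ∈ K)) :
    b ∈ A :=
  stmt0_general A hA b hb
end

section
/- Let A ⊂ B(X) be a strongly closed algebra with I ∈ A such that every closed subspace invariant under A has a complementary closed subspace also invariant under A. If q ∈ A is a (bounded, idempotent) projection, then the algebra qAq ⊂ B(qX) also has the property that every closed qAq-invariant subspace of qX has a qAq-invariant closed complement. -/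
/-!
Given a closed `qAq`-invariant subspace `L ⊆ qX`, let `K` be the closed `A`-invariant subspace
generated by `L`. Since `q a x = q a q x ∈ L` for `a ∈ A`, `x ∈ L`, the projection `q` maps `K`
into `L`. If `Kc` is a closed `A`-invariant complement of `K`, then `Kc ∩ qX` is the required
complement of `L` in `qX`: writing `x = q x = q k + q c` with `k ∈ K`, `c ∈ Kc` shows that it
spans `qX` together with `L`, and it meets `L ⊆ K` trivially.
-/

namespace Subalgebra

variable {R M : Type*} [CommRing R] [TopologicalSpace M] [AddCommGroup M] [Module R M]
  [IsTopologicalAddGroup M] [ContinuousConstSMul R M]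

def closedInvtHull (A : Subalgebra R (M →L[R] M)) (L : Submodule R M) : Submodule R M :=
  (Submodule.span R (Set.image2 (fun (a : M →L[R] M) x => a x) A L)).topologicalClosure

variable (A : Subalgebra R (M →L[R] M)) (L : Submodule R M)

theorem isClosed_closedInvtHull : IsClosed (A.closedInvtHull L : Set M) :=
  Submodule.isClosed_topologicalClosure _

theorem le_closedInvtHull : L ≤ A.closedInvtHull L := fun x hx =>
  Submodule.le_topologicalClosure _ <|
    Submodule.subset_span ⟨1, A.one_mem, x, hx, rfl⟩

variable {A L}

theorem apply_mem_closedInvtHull {a : M →L[R] M} (ha : a ∈ A) {x : M}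
    (hx : x ∈ A.closedInvtHull L) : a x ∈ A.closedInvtHull L := by
  have hspan : Submodule.span R (Set.image2 (fun (b : M →L[R] M) x => b x) A L) ≤
      (Submodule.span R (Set.image2 (fun (b : M →L[R] M) x => b x) A L)).comap
        (a : M →ₗ[R] M) := by
    rw [Submodule.span_le]
    rintro _ ⟨b, hb, y, hy, rfl⟩
    exact Submodule.subset_span ⟨a * b, A.mul_mem ha hb, y, hy, rfl⟩
  exact map_mem_closure a.continuous hx fun y hy => hspan hy

theorem closedInvtHull_le_comap {T : M →L[R] M} {N : Submodule R M} (hN : IsClosed (N : Set M))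
    (h : ∀ a ∈ A, ∀ x ∈ L, T (a x) ∈ N) :
    A.closedInvtHull L ≤ N.comap (T : M →ₗ[R] M) := by
  refine Submodule.topologicalClosure_minimal _ ?_ (hN.preimage T.continuous)
  rw [Submodule.span_le]
  rintro _ ⟨a, ha, x, hx, rfl⟩
  exact h a ha x hx

end Subalgebra

namespace LinearMap.IsIdempotentElem

open Submodule

variable {R M : Type*} [Semiring R] [AddCommMonoid M] [Module R M]

theorem sup_inf_range_eq_range {q : M →ₗ[R] M} (hq : IsIdempotentElem q)
    {L K Kc : Submodule R M} (hLq : L ≤ range q) (hKL : K ≤ L.comap q)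
    (hKc : Kc ≤ Kc.comap q) (hsup : K ⊔ Kc = ⊤) : L ⊔ (Kc ⊓ range q) = range q := by
  refine le_antisymm (sup_le hLq inf_le_right) fun x hx => ?_
  obtain ⟨k, hk, c, hc, rfl⟩ := mem_sup.1 (hsup ▸ mem_top : x ∈ K ⊔ Kc)
  rw [← LinearMap.IsIdempotentElem.mem_range_iff hq |>.1 hx, map_add]
  exact add_mem_sup (hKL hk) ⟨hKc hc, mem_range_self q c⟩

end LinearMap.IsIdempotentElem

theorem stmt1_general {X : Type*} [NormedAddCommGroup X] [NormedSpace ℂ X]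
    (A : Subalgebra ℂ (X →L[ℂ] X))
    (hCISL : ∀ K : Submodule ℂ X, IsClosed (K : Set X) → (∀ a ∈ A, ∀ x ∈ K, a x ∈ K) →
      ∃ Kc : Submodule ℂ X, IsClosed (Kc : Set X) ∧ (∀ a ∈ A, ∀ x ∈ Kc, a x ∈ Kc) ∧
        IsCompl K Kc)
    (q : X →L[ℂ] X) (hqA : q ∈ A) (hq : q * q = q)
    (L : Submodule ℂ X) (hLcl : IsClosed (L : Set X)) (hLq : L ≤ LinearMap.range (q : X →ₗ[ℂ] X))
    (hLinv : ∀ a ∈ A, ∀ x ∈ L, q (a (q x)) ∈ L) :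
    ∃ Lc : Submodule ℂ X, IsClosed (Lc : Set X) ∧ Lc ≤ LinearMap.range (q : X →ₗ[ℂ] X) ∧
      (∀ a ∈ A, ∀ x ∈ Lc, q (a (q x)) ∈ Lc) ∧
      L ⊓ Lc = ⊥ ∧ L ⊔ Lc = LinearMap.range (q : X →ₗ[ℂ] X) := by
  have hq' : IsIdempotentElem (q : X →ₗ[ℂ] X) :=
    ContinuousLinearMap.IsIdempotentElem.toLinearMap hq
  have hfix {x : X} (hx : x ∈ LinearMap.range (q : X →ₗ[ℂ] X)) : q x = x :=
    (LinearMap.IsIdempotentElem.mem_range_iff hq').1 hx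
  obtain ⟨Kc, hKc_closed, hKc_inv, hcompl⟩ := hCISL _ (A.isClosed_closedInvtHull L)
    fun a ha x hx => Subalgebra.apply_mem_closedInvtHull ha hx
  have hKL : A.closedInvtHull L ≤ L.comap (q : X →ₗ[ℂ] X) :=
    Subalgebra.closedInvtHull_le_comap hLcl fun a ha x hx => by
      simpa only [hfix (hLq hx)] using hLinv a ha x hx
  refine ⟨Kc ⊓ LinearMap.range (q : X →ₗ[ℂ] X),
    hKc_closed.inter (ContinuousLinearMap.IsIdempotentElem.isClosed_range hq), inf_le_right,
    ?_, (hcompl.disjoint.mono (A.le_closedInvtHull L) inf_le_left).eq_bot,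
    LinearMap.IsIdempotentElem.sup_inf_range_eq_range hq' hLq hKL
      (fun x hx => hKc_inv q hqA x hx) hcompl.sup_eq_top⟩
  rintro a ha x ⟨hxKc, hxq⟩
  rw [hfix hxq]
  exact ⟨hKc_inv q hqA _ (hKc_inv a ha x hxKc), LinearMap.mem_range_self _ _⟩

/-- If `A` is a strongly closed unital subalgebra of `B(X)` with complemented
invariant subspace lattice and `q ∈ A` is a projection, then the algebra `qAq ⊆ B(qX)` also
has complemented invariant subspace lattice: every closed `qAq`-invariant subspace `L` of
`qX` has a closed `qAq`-invariant complement inside `qX`. -/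
theorem stmt1 {X : Type*} [NormedAddCommGroup X] [NormedSpace ℂ X] [CompleteSpace X]
    (A : Subalgebra ℂ (X →L[ℂ] X))
    (hA : IsClosed ((fun a : X →L[ℂ] X => (a : X → X)) '' (A : Set (X →L[ℂ] X))))
    (hCISL : ∀ K : Submodule ℂ X, IsClosed (K : Set X) → (∀ a ∈ A, ∀ x ∈ K, a x ∈ K) →
      ∃ Kc : Submodule ℂ X, IsClosed (Kc : Set X) ∧ (∀ a ∈ A, ∀ x ∈ Kc, a x ∈ Kc) ∧
        IsCompl K Kc)
    (q : X →L[ℂ] X) (hqA : q ∈ A) (hq : q * q = q)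
    (L : Submodule ℂ X) (hLcl : IsClosed (L : Set X)) (hLq : L ≤ LinearMap.range (q : X →ₗ[ℂ] X))
    (hLinv : ∀ a ∈ A, ∀ x ∈ L, q (a (q x)) ∈ L) :
    ∃ Lc : Submodule ℂ X, IsClosed (Lc : Set X) ∧ Lc ≤ LinearMap.range (q : X →ₗ[ℂ] X) ∧
      (∀ a ∈ A, ∀ x ∈ Lc, q (a (q x)) ∈ Lc) ∧
      L ⊓ Lc = ⊥ ∧ L ⊔ Lc = LinearMap.range (q : X →ₗ[ℂ] X) :=
  stmt1_general A hCISL q hqA hq L hLcl hLq hLinv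
end

section
/- Let A ⊂ B(X) be a strongly closed algebra with I ∈ A having complemented invariant subspace lattice, and let q ∈ A be a projection. Then algLat(qAq) = q(algLat A)q, i.e., an operator c on qX leaves every closed qAq-invariant subspace of qX invariant if and only if c = qbq for some b ∈ B(X) leaving every closed A-invariant subspace of X invariant. -/
/-!
Both inclusions are elementary. If `c ∈ algLat (qAq)` and `K` is a closed `A`-invariant subspace,
then `K ∩ qX` is closed and `qAq`-invariant, so `c = qcq` maps `K` into `K`: one may take `b = c`.
Conversely, for a closed `qAq`-invariant `L ⊆ qX`, the subspace `{x | q a x ∈ L for all a ∈ A}`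
is closed, `A`-invariant (as `A` is an algebra), contains `L`, and is mapped into `L` by `q`
(as `1 ∈ A`); hence `qbq` maps `L` into `L` for every `b ∈ algLat A`.
-/

namespace ContinuousLinearMap

variable {R X : Type*} [CommRing R] [AddCommGroup X] [TopologicalSpace X] [Module R X]
  [IsTopologicalAddGroup X] [ContinuousConstSMul R X]
  {A : Subalgebra R (X →L[R] X)} {q : X →L[R] X}

theorem apply_mem_of_forall_compression_invariant [T1Space X] (hqA : q ∈ A)
    (hq : IsIdempotentElem q) {c : X →L[R] X} (hc : q * c * q = c)
    (hcL : ∀ L : Submodule R X, IsClosed (L : Set X) → L ≤ LinearMap.range (q : X →ₗ[R] X) →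
      (∀ a ∈ A, ∀ x ∈ L, q (a (q x)) ∈ L) → ∀ x ∈ L, c x ∈ L)
    {K : Submodule R X} (hK : IsClosed (K : Set X)) (hKA : ∀ a ∈ A, ∀ x ∈ K, a x ∈ K) :
    ∀ x ∈ K, c x ∈ K := by
  have hqK : ∀ x ∈ K, q x ∈ K := hKA q hqA
  set L := K ⊓ LinearMap.range (q : X →ₗ[R] X)
  have hL : IsClosed (L : Set X) := hK.inter (IsIdempotentElem.isClosed_range hq)
  have hLA : ∀ a ∈ A, ∀ x ∈ L, q (a (q x)) ∈ L := fun a ha x hx =>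
    ⟨hqK _ (hKA a ha _ (hqK x hx.1)), LinearMap.mem_range_self _ _⟩
  intro x hx
  have hcqx : c (q x) ∈ L :=
    hcL L hL inf_le_right hLA (q x) ⟨hqK x hx, LinearMap.mem_range_self _ _⟩
  rw [← hc]
  exact hqK _ hcqx.1

variable (A q) in
def compressionComap (L : Submodule R X) : Submodule R X :=
  ⨅ a ∈ A, L.comap ((q * a : X →L[R] X) : X →ₗ[R] X)

variable {L : Submodule R X}

theorem mem_compressionComap {x : X} : x ∈ compressionComap A q L ↔ ∀ a ∈ A, q (a x) ∈ L := by
  simp [compressionComap]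

theorem isClosed_compressionComap (hL : IsClosed (L : Set X)) :
    IsClosed (compressionComap A q L : Set X) := by
  simp only [compressionComap, Submodule.coe_iInf]
  exact isClosed_iInter fun a => isClosed_iInter fun _ => hL.preimage (q * a).continuous

theorem apply_mem_compressionComap :
    ∀ a ∈ A, ∀ x ∈ compressionComap A q L, a x ∈ compressionComap A q L := by
  intro a ha x hx
  exact mem_compressionComap.2 fun a' ha' => mem_compressionComap.1 hx (a' * a) (mul_mem ha' ha)

theorem apply_mem_of_mem_compressionComap {x : X} (hx : x ∈ compressionComap A q L) : q x ∈ L :=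
  mem_compressionComap.1 hx 1 (one_mem A)

theorem le_compressionComap (hq : IsIdempotentElem q) (hLq : L ≤ LinearMap.range (q : X →ₗ[R] X))
    (hLA : ∀ a ∈ A, ∀ x ∈ L, q (a (q x)) ∈ L) : L ≤ compressionComap A q L := by
  intro x hx
  have hqx : q x = x := (LinearMap.IsIdempotentElem.mem_range_iff (IsIdempotentElem.toLinearMap hq)).1 (hLq hx)
  exact mem_compressionComap.2 fun a ha => hqx ▸ hLA a ha x hx

theorem compression_apply_mem_of_forall_invariant (hq : IsIdempotentElem q) {b : X →L[R] X}
    (hb : ∀ K : Submodule R X, IsClosed (K : Set X) → (∀ a ∈ A, ∀ x ∈ K, a x ∈ K) →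
      ∀ x ∈ K, b x ∈ K)
    (hL : IsClosed (L : Set X)) (hLq : L ≤ LinearMap.range (q : X →ₗ[R] X))
    (hLA : ∀ a ∈ A, ∀ x ∈ L, q (a (q x)) ∈ L) :
    ∀ x ∈ L, (q * b * q) x ∈ L := by
  intro x hx
  have hqx : q x = x := (LinearMap.IsIdempotentElem.mem_range_iff (IsIdempotentElem.toLinearMap hq)).1 (hLq hx)
  have hbx : b x ∈ compressionComap A q L :=
    hb _ (isClosed_compressionComap hL) apply_mem_compressionComap x
      (le_compressionComap hq hLq hLA hx)
  simpa [hqx] using apply_mem_of_mem_compressionComap hbx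

end ContinuousLinearMap

theorem stmt2_general {X : Type*} [NormedAddCommGroup X] [NormedSpace ℂ X]
    (A : Subalgebra ℂ (X →L[ℂ] X))
    (q : X →L[ℂ] X) (hqA : q ∈ A) (hq : q * q = q)
    (c : X →L[ℂ] X) (hc : q * c * q = c) :
    (∀ L : Submodule ℂ X, IsClosed (L : Set X) → L ≤ LinearMap.range (q : X →ₗ[ℂ] X) →
        (∀ a ∈ A, ∀ x ∈ L, q (a (q x)) ∈ L) → ∀ x ∈ L, c x ∈ L) ↔
      ∃ b : X →L[ℂ] X,
        (∀ K : Submodule ℂ X, IsClosed (K : Set X) → (∀ a ∈ A, ∀ x ∈ K, a x ∈ K) →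
          ∀ x ∈ K, b x ∈ K) ∧ c = q * b * q := by
  constructor
  · intro hcL
    exact ⟨c, fun K hK hKA =>
      ContinuousLinearMap.apply_mem_of_forall_compression_invariant hqA hq hc hcL hK hKA,
      hc.symm⟩
  · rintro ⟨b, hb, rfl⟩ L hL hLq hLA
    exact ContinuousLinearMap.compression_apply_mem_of_forall_invariant hq hb hL hLq hLA

/-- For a strongly closed unital algebra `A` with complemented invariant
subspace lattice and a projection `q ∈ A`, one has `algLat(qAq) = q (algLat A) q`:
an operator `c` on `qX` (realized as `c ∈ B(X)` with `q c q = c`) leaves every closed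
`qAq`-invariant subspace of `qX` invariant iff `c = q b q` for some `b ∈ algLat A`. -/
theorem stmt2 {X : Type*} [NormedAddCommGroup X] [NormedSpace ℂ X] [CompleteSpace X]
    (A : Subalgebra ℂ (X →L[ℂ] X))
    (hA : IsClosed ((fun a : X →L[ℂ] X => (a : X → X)) '' (A : Set (X →L[ℂ] X))))
    (hCISL : ∀ K : Submodule ℂ X, IsClosed (K : Set X) → (∀ a ∈ A, ∀ x ∈ K, a x ∈ K) →
      ∃ Kc : Submodule ℂ X, IsClosed (Kc : Set X) ∧ (∀ a ∈ A, ∀ x ∈ Kc, a x ∈ Kc) ∧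
        IsCompl K Kc)
    (q : X →L[ℂ] X) (hqA : q ∈ A) (hq : q * q = q)
    (c : X →L[ℂ] X) (hc : q * c * q = c) :
    (∀ L : Submodule ℂ X, IsClosed (L : Set X) → L ≤ LinearMap.range (q : X →ₗ[ℂ] X) →
        (∀ a ∈ A, ∀ x ∈ L, q (a (q x)) ∈ L) → ∀ x ∈ L, c x ∈ L) ↔
      ∃ b : X →L[ℂ] X,
        (∀ K : Submodule ℂ X, IsClosed (K : Set X) → (∀ a ∈ A, ∀ x ∈ K, a x ∈ K) →
          ∀ x ∈ K, b x ∈ K) ∧ c = q * b * q :=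
  stmt2_general A q hqA hq c hc
end

section
/- Let A ⊂ B(X) be a strongly closed unital algebra with complemented invariant subspace lattice and let q ∈ B(X) be a projection commuting with every element of A. Then the strong-operator closure of qAq in B(qX) is an algebra such that every closed invariant subspace of it in qX has a closed invariant complement in qX. -/
/-!
Every closed `S`-invariant `L ⊆ qX` is `A`-invariant, because `qaq ∈ S` acts as `a` on `qX`
(`q` commutes with `a`). So `L` has a closed `A`-invariant complement `K` in `X`, and by the
modular law `K ∩ qX` complements `L` in `qX`. It is invariant under `qAq`, hence, being closed,
under the pointwise closure `S` of `qAq`.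
-/

lemma apply_mem_of_mem_closure {ι Y : Type*} [TopologicalSpace Y] {T : Set (ι → Y)}
    {f : ι → Y} (hf : f ∈ closure T) (i : ι) {C : Set Y} (hC : IsClosed C)
    (hT : ∀ g ∈ T, g i ∈ C) : f i ∈ C :=
  closure_minimal hT (hC.preimage (continuous_apply i)) hf

lemma IsCompl.sup_inf_eq_of_le {α : Type*} [Lattice α] [BoundedOrder α] [IsModularLattice α]
    {a b c : α} (h : IsCompl a b) (hac : a ≤ c) : a ⊔ b ⊓ c = c := by
  rw [← sup_inf_assoc_of_le b hac, h.sup_eq_top, top_inf_eq]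

namespace ContinuousLinearMap

lemma mul_mul_apply_of_mem_range {R M : Type*} [Semiring R] [AddCommMonoid M] [Module R M]
    [TopologicalSpace M] {q a : M →L[R] M} (hq : IsIdempotentElem q) (hqa : Commute q a) {x : M}
    (hx : x ∈ LinearMap.range (q : M →ₗ[R] M)) : (q * a * q) x = a x := by
  have hqx : q x = x := (LinearMap.IsIdempotentElem.mem_range_iff
    (IsIdempotentElem.toLinearMap hq)).1 hx
  rw [mul_apply_eq_comp, hqx, hqa.eq, mul_apply_eq_comp, hqx]

end ContinuousLinearMap

theorem stmt3_general {X : Type*} [NormedAddCommGroup X] [NormedSpace ℂ X] [CompleteSpace X]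
    (A : Subalgebra ℂ (X →L[ℂ] X))
    (hCISL : ∀ K : Submodule ℂ X, IsClosed (K : Set X) → (∀ a ∈ A, ∀ x ∈ K, a x ∈ K) →
      ∃ Kc : Submodule ℂ X, IsClosed (Kc : Set X) ∧ (∀ a ∈ A, ∀ x ∈ Kc, a x ∈ Kc) ∧
        IsCompl K Kc)
    (q : X →L[ℂ] X) (hq : q * q = q) (hq' : ∀ a ∈ A, q * a = a * q)
    -- the SOT closure of `qAq`
    (S : Set (X →L[ℂ] X))
    (hS : S = {t : X →L[ℂ] X |
      (t : X → X) ∈ closure ((fun a : X →L[ℂ] X => (a : X → X)) ''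
        ((fun a : X →L[ℂ] X => q * a * q) '' (A : Set (X →L[ℂ] X))))})
    (L : Submodule ℂ X) (hLcl : IsClosed (L : Set X)) (hLq : L ≤ LinearMap.range (q : X →ₗ[ℂ] X))
    (hLinv : ∀ t ∈ S, ∀ x ∈ L, t x ∈ L) :
    ∃ Lc : Submodule ℂ X, IsClosed (Lc : Set X) ∧ Lc ≤ LinearMap.range (q : X →ₗ[ℂ] X) ∧
      (∀ t ∈ S, ∀ x ∈ Lc, t x ∈ Lc) ∧
      L ⊓ Lc = ⊥ ∧ L ⊔ Lc = LinearMap.range (q : X →ₗ[ℂ] X) := by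
  set Q := LinearMap.range (q : X →ₗ[ℂ] X)
  have hcompr : ∀ a ∈ A, ∀ x ∈ Q, (q * a * q) x = a x :=
    fun a ha _ hx => ContinuousLinearMap.mul_mul_apply_of_mem_range hq (hq' a ha) hx
  have hLA : ∀ a ∈ A, ∀ x ∈ L, a x ∈ L := fun a ha x hx =>
    hcompr a ha x (hLq hx) ▸ hLinv _ (hS ▸ subset_closure ⟨_, ⟨a, ha, rfl⟩, rfl⟩) x hx
  obtain ⟨K, hKcl, hKinv, hLK⟩ := hCISL L hLcl hLA
  have hKQ_closed : IsClosed ((K ⊓ Q : Submodule ℂ X) : Set X) :=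
    hKcl.inter (ContinuousLinearMap.IsIdempotentElem.isClosed_range hq)
  refine ⟨K ⊓ Q, hKQ_closed, inf_le_right, ?_, (hLK.disjoint.mono_right inf_le_left).eq_bot,
    hLK.sup_inf_eq_of_le hLq⟩
  intro t ht x hx
  rw [hS] at ht
  refine apply_mem_of_mem_closure ht x hKQ_closed ?_
  rintro _ ⟨_, ⟨a, ha, rfl⟩, rfl⟩
  show (q * a * q) x ∈ K ⊓ Q
  exact ⟨hcompr a ha x hx.2 ▸ hKinv a ha x hx.1, LinearMap.mem_range_self _ _⟩

/-- If `A` is a strongly closed unital algebra with complemented invariant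
subspace lattice and `q ∈ A'` is a projection, then the strong-operator closure of `qAq`
(as operators on `qX`) has complemented invariant subspace lattice: every closed subspace
`L ⊆ qX` invariant under every member of the SOT closure of `qAq` admits a closed invariant
complement inside `qX`. -/
theorem stmt3 {X : Type*} [NormedAddCommGroup X] [NormedSpace ℂ X] [CompleteSpace X]
    (A : Subalgebra ℂ (X →L[ℂ] X))
    (hA : IsClosed ((fun a : X →L[ℂ] X => (a : X → X)) '' (A : Set (X →L[ℂ] X))))
    (hCISL : ∀ K : Submodule ℂ X, IsClosed (K : Set X) → (∀ a ∈ A, ∀ x ∈ K, a x ∈ K) →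
      ∃ Kc : Submodule ℂ X, IsClosed (Kc : Set X) ∧ (∀ a ∈ A, ∀ x ∈ Kc, a x ∈ Kc) ∧
        IsCompl K Kc)
    (q : X →L[ℂ] X) (hq : q * q = q) (hq' : ∀ a ∈ A, q * a = a * q)
    -- the SOT closure of `qAq`
    (S : Set (X →L[ℂ] X))
    (hS : S = {t : X →L[ℂ] X |
      (t : X → X) ∈ closure ((fun a : X →L[ℂ] X => (a : X → X)) ''
        ((fun a : X →L[ℂ] X => q * a * q) '' (A : Set (X →L[ℂ] X))))})
    (L : Submodule ℂ X) (hLcl : IsClosed (L : Set X)) (hLq : L ≤ LinearMap.range (q : X →ₗ[ℂ] X))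
    (hLinv : ∀ t ∈ S, ∀ x ∈ L, t x ∈ L) :
    ∃ Lc : Submodule ℂ X, IsClosed (Lc : Set X) ∧ Lc ≤ LinearMap.range (q : X →ₗ[ℂ] X) ∧
      (∀ t ∈ S, ∀ x ∈ Lc, t x ∈ Lc) ∧
      L ⊓ Lc = ⊥ ∧ L ⊔ Lc = LinearMap.range (q : X →ₗ[ℂ] X) :=
  stmt3_general A hCISL q hq hq' S hS L hLcl hLq hLinv
end

section
/- Let A ⊂ B(X) be an algebra with complemented invariant subspace lattice, K a closed A-invariant subspace, and p ∈ A' a projection onto K. If t₁, ..., tₙ are bounded operators commuting with pAp (on pX), then the graph subspace Γ = {x ⊕ t₁x ⊕ t₂x ⊕ ... ⊕ tₙx : x ∈ pX} ⊂ X^(n+1) is a closed A^(n+1)-invariant subspace admitting an A^(n+1)-invariant closed complement in X^(n+1); in fact (I−p)X ⊕ X^(n) is such a complement. -/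
/-!
The graph `Γ` and the complement `C = (I - p)X ⊕ X^(n)` are the range and the kernel of the
single idempotent `P v = (p v₀, t₁ p v₀, …, tₙ p v₀)` on `X^(n+1)`. An idempotent continuous
operator has closed range and kernel, which are complementary, and both are invariant under
every operator commuting with it. Finally `P` commutes with `a ⊕ ⋯ ⊕ a` for `a ∈ A`, because
`p ∈ A'` and each `tᵢ`, commuting with the compression `pAp`, in fact commutes with `A`.
-/

theorem Commute.of_commute_compression {M : Type*} [Semigroup M] {p a t : M}
    (hp : p * p = p) (hpa : Commute p a) (ht : p * t * p = t) (hta : Commute t (p * a * p)) :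
    Commute t a := by
  have htp : t * p = t := by rw [← ht, mul_assoc, hp]
  have hpt : p * t = t := by rw [← ht, ← mul_assoc, ← mul_assoc, hp]
  have hpap_left : p * a * p = p * a := by rw [mul_assoc, ← hpa.eq, ← mul_assoc, hp]
  have hpap_right : p * a * p = a * p := by rw [hpa.eq, mul_assoc, hp]
  calc t * a = t * (p * a * p) := by rw [hpap_left, ← mul_assoc, htp]
    _ = p * a * p * t := hta.eq
    _ = a * t := by rw [hpap_right, mul_assoc, hpt]

namespace ContinuousLinearMap

variable {R X : Type*} [Semiring R] [TopologicalSpace X] [AddCommMonoid X] [Module R X] {n : ℕ}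

def graphProjection (p : X →L[R] X) (t : Fin n → X →L[R] X) :
    (Fin (n + 1) → X) →L[R] (Fin (n + 1) → X) :=
  (pi (Fin.cons p fun i => t i * p)).comp (proj 0)

variable (p : X →L[R] X) (t : Fin n → X →L[R] X)

theorem pi_cons_comp_of_isIdempotentElem (hp : IsIdempotentElem p) :
    (pi (Fin.cons p fun i => t i * p) : X →L[R] (Fin (n + 1) → X)).comp p =
      pi (Fin.cons p fun i => t i * p) := by
  ext x j
  refine Fin.cases ?_ (fun i => ?_) j
  · simpa using congr($hp x)
  · simpa using congr(t i ($hp x))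

theorem isIdempotentElem_graphProjection (hp : IsIdempotentElem p) :
    IsIdempotentElem (graphProjection p t) := by
  ext v j
  simp only [graphProjection, comp_apply, pi_apply]
  exact congr($(pi_cons_comp_of_isIdempotentElem p t hp) (v 0) j)

theorem range_graphProjection :
    LinearMap.range (graphProjection p t : (Fin (n + 1) → X) →ₗ[R] (Fin (n + 1) → X)) =
      LinearMap.range (pi (Fin.cons p fun i => t i * p : Fin (n + 1) → X →L[R] X) :
        X →ₗ[R] (Fin (n + 1) → X)) := by
  refine LinearMap.range_comp_of_range_eq_top _ (LinearMap.range_eq_top.2 fun x => ?_)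
  exact ⟨Pi.single 0 x, by simp⟩

theorem ker_graphProjection :
    LinearMap.ker (graphProjection p t : (Fin (n + 1) → X) →ₗ[R] (Fin (n + 1) → X)) =
      LinearMap.ker ((p.comp (proj (0 : Fin (n + 1))) : (Fin (n + 1) → X) →L[R] X) :
        (Fin (n + 1) → X) →ₗ[R] X) := by
  ext v
  simp only [LinearMap.mem_ker, coe_coe, graphProjection, comp_apply, proj_apply]
  refine ⟨fun h => by simpa using congr_fun h 0, fun h => funext fun j => ?_⟩
  refine Fin.cases ?_ (fun i => ?_) j <;> simp [h]

theorem commute_graphProjection_piMap {a : X →L[R] X} (hpa : Commute p a)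
    (hta : ∀ i, Commute (t i) a) :
    Commute (graphProjection p t) (piMap fun _ => a) := by
  ext v j
  refine Fin.cases ?_ (fun i => ?_) j
  · simpa [graphProjection] using congr($hpa.eq (v 0))
  · simpa [graphProjection, mul_assoc] using congr($(((hta i).mul_left hpa).eq) (v 0))

end ContinuousLinearMap

theorem stmt4_general {X : Type*} [NormedAddCommGroup X] [NormedSpace ℂ X]
    (A : Subalgebra ℂ (X →L[ℂ] X))
    (p : X →L[ℂ] X) (hp : p * p = p) (hpA : ∀ a ∈ A, p * a = a * p)
    (n : ℕ) (t : Fin n → (X →L[ℂ] X))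
    (ht : ∀ i, p * t i * p = t i)
    (htA : ∀ i, ∀ a ∈ A, t i * (p * a * p) = (p * a * p) * t i)
    -- the graph subspace Γ and the complement C = (I−p)X ⊕ X^(n)
    (Γ : Submodule ℂ (Fin (n + 1) → X))
    (hΓ : Γ = LinearMap.range
      (ContinuousLinearMap.pi (Fin.cons p (fun i => t i * p) :
        Fin (n + 1) → (X →L[ℂ] X)) : X →ₗ[ℂ] (Fin (n + 1) → X)))
    (C : Submodule ℂ (Fin (n + 1) → X))
    (hC : C = LinearMap.ker ((p.comp (ContinuousLinearMap.proj (0 : Fin (n + 1))) :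
      (Fin (n + 1) → X) →L[ℂ] X) : (Fin (n + 1) → X) →ₗ[ℂ] X)) :
    IsClosed (Γ : Set (Fin (n + 1) → X)) ∧
      (∀ a ∈ A, ∀ v ∈ Γ, (fun i => a (v i)) ∈ Γ) ∧
      IsClosed (C : Set (Fin (n + 1) → X)) ∧
      (∀ a ∈ A, ∀ v ∈ C, (fun i => a (v i)) ∈ C) ∧
      IsCompl Γ C := by
  open ContinuousLinearMap in
  set P := graphProjection p t
  have hP : IsIdempotentElem P := isIdempotentElem_graphProjection p t hp
  have hΓP : Γ = LinearMap.range (P : (Fin (n + 1) → X) →ₗ[ℂ] (Fin (n + 1) → X)) :=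
    hΓ.trans (range_graphProjection p t).symm
  have hCP : C = LinearMap.ker (P : (Fin (n + 1) → X) →ₗ[ℂ] (Fin (n + 1) → X)) :=
    hC.trans (ker_graphProjection p t).symm
  subst hΓP hCP
  have hinv (a) (ha : a ∈ A) := hP.commute_iff.1 <| commute_graphProjection_piMap p t (hpA a ha)
    fun i => .of_commute_compression hp (hpA a ha) (ht i) (htA i a ha)
  exact ⟨hP.isClosed_range, fun a ha v hv => (hinv a ha).1 hv, P.isClosed_ker,
    fun a ha v hv => (hinv a ha).2 hv, LinearMap.IsIdempotentElem.isCompl hP.toLinearMap⟩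

/-- If `A` has complemented invariant subspace lattice, `K ∈ Lat A`,
`p ∈ A'` is a projection onto `K`, and `t₁, …, tₙ` are bounded operators on `pX`
(realized as operators `t i` on `X` with `p (t i) p = t i`) commuting with `pAp`, then the
graph subspace `Γ = {x ⊕ t₁x ⊕ ⋯ ⊕ tₙx : x ∈ pX} ⊆ X^(n+1)` is a closed
`A^(n+1)`-invariant subspace, and `C = (I−p)X ⊕ X^(n)` is a closed `A^(n+1)`-invariant
complement of it. -/
theorem stmt4 {X : Type*} [NormedAddCommGroup X] [NormedSpace ℂ X] [CompleteSpace X]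
    (A : Subalgebra ℂ (X →L[ℂ] X))
    (hCISL : ∀ K : Submodule ℂ X, IsClosed (K : Set X) → (∀ a ∈ A, ∀ x ∈ K, a x ∈ K) →
      ∃ Kc : Submodule ℂ X, IsClosed (Kc : Set X) ∧ (∀ a ∈ A, ∀ x ∈ Kc, a x ∈ Kc) ∧
        IsCompl K Kc)
    (K : Submodule ℂ X) (hKcl : IsClosed (K : Set X)) (hKinv : ∀ a ∈ A, ∀ x ∈ K, a x ∈ K)
    (p : X →L[ℂ] X) (hp : p * p = p) (hpA : ∀ a ∈ A, p * a = a * p)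
    (hpK : LinearMap.range (p : X →ₗ[ℂ] X) = K)
    (n : ℕ) (t : Fin n → (X →L[ℂ] X))
    (ht : ∀ i, p * t i * p = t i)
    (htA : ∀ i, ∀ a ∈ A, t i * (p * a * p) = (p * a * p) * t i)
    -- the graph subspace Γ and the complement C = (I−p)X ⊕ X^(n)
    (Γ : Submodule ℂ (Fin (n + 1) → X))
    (hΓ : Γ = LinearMap.range
      (ContinuousLinearMap.pi (Fin.cons p (fun i => t i * p) :
        Fin (n + 1) → (X →L[ℂ] X)) : X →ₗ[ℂ] (Fin (n + 1) → X)))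
    (C : Submodule ℂ (Fin (n + 1) → X))
    (hC : C = LinearMap.ker ((p.comp (ContinuousLinearMap.proj (0 : Fin (n + 1))) :
      (Fin (n + 1) → X) →L[ℂ] X) : (Fin (n + 1) → X) →ₗ[ℂ] X)) :
    IsClosed (Γ : Set (Fin (n + 1) → X)) ∧
      (∀ a ∈ A, ∀ v ∈ Γ, (fun i => a (v i)) ∈ Γ) ∧
      IsClosed (C : Set (Fin (n + 1) → X)) ∧
      (∀ a ∈ A, ∀ v ∈ C, (fun i => a (v i)) ∈ C) ∧
      IsCompl Γ C :=
  stmt4_general A p hp hpA n t ht htA Γ hΓ C hC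
end

section
/- Let A ⊂ B(X) be a strongly closed unital subalgebra with complemented invariant subspace lattice. If A is reflexive (i.e., algLat A = A), then A equals its bicommutant: A'' = A. -/
/-!
A closed `A`-invariant subspace with a closed `A`-invariant complement is the range of a bounded
idempotent (closed graph theorem) commuting with `A`, so every element of `A''` leaves it
invariant; reflexivity then gives `A'' ⊆ A`.
-/

namespace Submodule.IsTopCompl

variable {R M : Type*} [Ring R] [TopologicalSpace M] [AddCommGroup M] [Module R M]
  {p q : Submodule R M}

theorem commute_projectionL_iff (h : IsTopCompl p q) {T : M →L[R] M} :
    Commute (p.projectionL q h) T ↔ (∀ x ∈ p, T x ∈ p) ∧ ∀ x ∈ q, T x ∈ q := by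
  rw [ContinuousLinearMap.IsIdempotentElem.commute_iff (isIdempotentElem_projectionL h),
    range_projectionL, ker_projectionL]
  rfl

theorem apply_mem_of_mem_centralizer_centralizer (h : IsTopCompl p q) {S : Set (M →L[R] M)}
    (hp : ∀ a ∈ S, ∀ x ∈ p, a x ∈ p) (hq : ∀ a ∈ S, ∀ x ∈ q, a x ∈ q) {b : M →L[R] M}
    (hb : b ∈ Set.centralizer (Set.centralizer S)) : ∀ x ∈ p, b x ∈ p := by
  have hP : p.projectionL q h ∈ Set.centralizer S := fun a ha =>
    (h.commute_projectionL_iff.mpr ⟨hp a ha, hq a ha⟩).eq.symm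
  exact (h.commute_projectionL_iff.mp (hb _ hP)).1

end Submodule.IsTopCompl

theorem stmt5_general {X : Type*} [NormedAddCommGroup X] [NormedSpace ℂ X] [CompleteSpace X]
    (A : Subalgebra ℂ (X →L[ℂ] X))
    (hCISL : ∀ K : Submodule ℂ X, IsClosed (K : Set X) → (∀ a ∈ A, ∀ x ∈ K, a x ∈ K) →
      ∃ Kc : Submodule ℂ X, IsClosed (Kc : Set X) ∧ (∀ a ∈ A, ∀ x ∈ Kc, a x ∈ Kc) ∧
        IsCompl K Kc)
    (hrefl : ∀ b : X →L[ℂ] X,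
      (∀ K : Submodule ℂ X, IsClosed (K : Set X) → (∀ a ∈ A, ∀ x ∈ K, a x ∈ K) →
        ∀ x ∈ K, b x ∈ K) → b ∈ A) :
    Set.centralizer (Set.centralizer (A : Set (X →L[ℂ] X))) = (A : Set (X →L[ℂ] X)) := by
  refine Set.Subset.antisymm (fun b hb => hrefl b fun K hK hKinv => ?_)
    Set.subset_centralizer_centralizer
  obtain ⟨Kc, hKc, hKcinv, hcompl⟩ := hCISL K hK hKinv
  have hKKc : K.IsTopCompl Kc := Submodule.IsCompl.isTopCompl_of_isClosed hcompl hK hKc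
  exact hKKc.apply_mem_of_mem_centralizer_centralizer hKinv hKcinv hb

/-- A strongly closed unital subalgebra of `B(X)` with complemented invariant
subspace lattice which is reflexive (`algLat A ⊆ A`) equals its bicommutant: `A'' = A`. -/
theorem stmt5 {X : Type*} [NormedAddCommGroup X] [NormedSpace ℂ X] [CompleteSpace X]
    (A : Subalgebra ℂ (X →L[ℂ] X))
    (hA : IsClosed ((fun a : X →L[ℂ] X => (a : X → X)) '' (A : Set (X →L[ℂ] X))))
    (hCISL : ∀ K : Submodule ℂ X, IsClosed (K : Set X) → (∀ a ∈ A, ∀ x ∈ K, a x ∈ K) →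
      ∃ Kc : Submodule ℂ X, IsClosed (Kc : Set X) ∧ (∀ a ∈ A, ∀ x ∈ Kc, a x ∈ Kc) ∧
        IsCompl K Kc)
    (hrefl : ∀ b : X →L[ℂ] X,
      (∀ K : Submodule ℂ X, IsClosed (K : Set X) → (∀ a ∈ A, ∀ x ∈ K, a x ∈ K) →
        ∀ x ∈ K, b x ∈ K) → b ∈ A) :
    Set.centralizer (Set.centralizer (A : Set (X →L[ℂ] X))) = (A : Set (X →L[ℂ] X)) :=
  stmt5_general A hCISL hrefl
end

section
/- Let A ⊂ B(X) be a strongly closed unital algebra with complemented invariant subspace lattice. If Q ∈ A' satisfies Q² = 0, then Q commutes with every operator in algLat A, i.e., Q ∈ (algLat A)'. -/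
/-!
`K = ker Q` is a closed `A`-invariant subspace, so it has a closed invariant complement `C`.
Since `Q` commutes with `A`, the "graph" `(1 - Q)⁻¹ C = (1 + Q) C` is again closed and invariant.
For `b ∈ algLat A` and `w ∈ C`, the vector `(1 - Q) b (1 + Q) w - b w = (bQ - Qb) w` then lies in
`C` (as `b` leaves `C` and the graph invariant) and in `K` (as `Q² = 0` and `b K ⊆ K`), so it
vanishes; on `K` both `Qb` and `bQ` vanish.
-/

namespace Module.End

variable {R M : Type*} [Ring R] [AddCommGroup M] [Module R M]

theorem mapsTo_ker_of_commute {Q a : Module.End R M} (h : Commute Q a) :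
    ∀ x ∈ LinearMap.ker Q, a x ∈ LinearMap.ker Q := fun x hx => by
  rw [LinearMap.mem_ker, ← mul_apply, h.eq, mul_apply, LinearMap.mem_ker.mp hx, map_zero]

theorem mapsTo_comap_of_commute {g a : Module.End R M} (h : Commute g a) {C : Submodule R M}
    (hC : ∀ x ∈ C, a x ∈ C) : ∀ x ∈ C.comap g, a x ∈ C.comap g := fun x hx => by
  rw [Submodule.mem_comap, ← mul_apply, h.eq]
  exact hC _ hx

theorem commute_of_mul_self_eq_zero_of_isCompl_ker {Q b : Module.End R M} (hQ : Q * Q = 0)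
    {C : Submodule R M} (hC : IsCompl (LinearMap.ker Q) C)
    (hbK : ∀ x ∈ LinearMap.ker Q, b x ∈ LinearMap.ker Q) (hbC : ∀ x ∈ C, b x ∈ C)
    (hbG : ∀ x ∈ C.comap (1 - Q), b x ∈ C.comap (1 - Q)) : Commute Q b := by
  have hQQ (x : M) : Q (Q x) = 0 := LinearMap.congr_fun hQ x
  have hQb (x : M) : Q (b x) ∈ LinearMap.ker Q := hQQ (b x)
  have hbQ (x : M) : b (Q x) ∈ LinearMap.ker Q := hbK _ (hQQ x)
  refine LinearMap.ext_on_codisjoint hC.codisjoint (fun k hk => ?_) (fun w hw => ?_)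
  · have hk : Q k = 0 := hk
    simp only [mul_apply, hk, map_zero, show Q (b k) = 0 from hbK k hk]
  · have hgraph : w + Q w ∈ C.comap (1 - Q) := by
      simpa [hQQ] using hw
    have hcomm : (1 - Q) (b (w + Q w)) - b w = b (Q w) - Q (b w) := by
      simp only [LinearMap.sub_apply, one_apply, map_add, show Q (b (Q w)) = 0 from hbQ w]
      abel
    have hC' : b (Q w) - Q (b w) ∈ C := hcomm ▸ C.sub_mem (hbG _ hgraph) (hbC w hw)
    have hK : b (Q w) - Q (b w) ∈ LinearMap.ker Q := Submodule.sub_mem _ (hbQ w) (hQb w)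
    exact (sub_eq_zero.mp (Submodule.disjoint_def.mp hC.disjoint _ hK hC')).symm

end Module.End

theorem stmt7_general {X : Type*} [NormedAddCommGroup X] [NormedSpace ℂ X]
    (A : Subalgebra ℂ (X →L[ℂ] X))
    (hCISL : ∀ K : Submodule ℂ X, IsClosed (K : Set X) → (∀ a ∈ A, ∀ x ∈ K, a x ∈ K) →
      ∃ Kc : Submodule ℂ X, IsClosed (Kc : Set X) ∧ (∀ a ∈ A, ∀ x ∈ Kc, a x ∈ Kc) ∧
        IsCompl K Kc)
    (Q : X →L[ℂ] X) (hQA : ∀ a ∈ A, Q * a = a * Q) (hQ2 : Q * Q = 0)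
    (b : X →L[ℂ] X)
    (hb : ∀ K : Submodule ℂ X, IsClosed (K : Set X) → (∀ a ∈ A, ∀ x ∈ K, a x ∈ K) →
      ∀ x ∈ K, b x ∈ K) :
    Q * b = b * Q := by
  have hK (a) (ha : a ∈ A) :=
    Module.End.mapsTo_ker_of_commute (congrArg ContinuousLinearMap.toLinearMap (hQA a ha))
  obtain ⟨C, hCclosed, hCinv, hC⟩ := hCISL _ Q.isClosed_ker hK
  set G := C.comap ((1 - Q : X →L[ℂ] X) : X →ₗ[ℂ] X)
  have hG : IsClosed (G : Set X) := hCclosed.preimage (1 - Q).continuous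
  have hGinv (a) (ha : a ∈ A) : ∀ x ∈ G, a x ∈ G :=
    Module.End.mapsTo_comap_of_commute
      (congrArg ContinuousLinearMap.toLinearMap ((Commute.one_left a).sub_left (hQA a ha)))
      (hCinv a ha)
  exact ContinuousLinearMap.coe_injective <|
    Module.End.commute_of_mul_self_eq_zero_of_isCompl_ker
      (congrArg ContinuousLinearMap.toLinearMap hQ2) hC
      (hb _ Q.isClosed_ker hK) (hb C hCclosed hCinv) (hb _ hG hGinv)

/-- If `A` is a strongly closed unital algebra with complemented invariant
subspace lattice and `Q ∈ A'` satisfies `Q² = 0`, then `Q` commutes with every operator in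
`algLat A`. -/
theorem stmt7 {X : Type*} [NormedAddCommGroup X] [NormedSpace ℂ X] [CompleteSpace X]
    (A : Subalgebra ℂ (X →L[ℂ] X))
    (hA : IsClosed ((fun a : X →L[ℂ] X => (a : X → X)) '' (A : Set (X →L[ℂ] X))))
    (hCISL : ∀ K : Submodule ℂ X, IsClosed (K : Set X) → (∀ a ∈ A, ∀ x ∈ K, a x ∈ K) →
      ∃ Kc : Submodule ℂ X, IsClosed (Kc : Set X) ∧ (∀ a ∈ A, ∀ x ∈ Kc, a x ∈ Kc) ∧
        IsCompl K Kc)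
    (Q : X →L[ℂ] X) (hQA : ∀ a ∈ A, Q * a = a * Q) (hQ2 : Q * Q = 0)
    (b : X →L[ℂ] X)
    (hb : ∀ K : Submodule ℂ X, IsClosed (K : Set X) → (∀ a ∈ A, ∀ x ∈ K, a x ∈ K) →
      ∀ x ∈ K, b x ∈ K) :
    Q * b = b * Q :=
  stmt7_general A hCISL Q hQA hQ2 b hb
end

section
/- Let A ⊂ B(X) be a strongly closed unital algebra with complemented invariant subspace lattice. If Q ∈ A' is nilpotent (Q^m = 0 for some m ∈ ℕ), then Q ∈ (algLat A)'. -/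
/-!
For `Q` in the commutant, `exp (t • Q)` is an invertible element of the commutant, so conjugating
by it preserves `algLat A`; differentiating at `t = 0` shows that `D = Q * b - b * Q` lies in
`algLat A` as well.

For nilpotent `Q`, let `E` be the projection onto `ker Q` along an invariant complement. Then `E`
commutes with `A`, with `b` and with `D`, and `(1 - E) * Q` is in the commutant with smaller
nilpotency order, so by induction it commutes with `b`, i.e. `(1 - E) * D = 0`. Since `Q * E = 0`
we also get `D * E = 0`, hence `D = E * D = D * E = 0`.
-/

open NormedSpace Set

lemma mul_pow_succ_of_mul_eq_self {R : Type*} [Monoid R] {P Q : R} (hQP : Q * P = Q) (n : ℕ) :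
    (P * Q) ^ (n + 1) = P * Q ^ (n + 1) := by
  rw [pow_succ, ← mul_assoc, mul_pow_mul, hQP, mul_assoc, ← pow_succ]

lemma commute_of_commute_one_sub_mul {R : Type*} [Ring R] {Q b E : R} (hQE : Q * E = 0)
    (hEb : Commute E b) (hED : Commute E (Q * b - b * Q)) (h : Commute ((1 - E) * Q) b) :
    Commute Q b := by
  set D := Q * b - b * Q
  have hDE : D * E = 0 := by
    rw [sub_mul, mul_assoc, ← hEb.eq, ← mul_assoc, hQE, mul_assoc, hQE, zero_mul, mul_zero,
      sub_zero]
  have hD : (1 - E) * D = 0 := calc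
    (1 - E) * D = (1 - E) * Q * b - b * ((1 - E) * Q) := by
      rw [mul_sub, ← mul_assoc, ← mul_assoc, ((Commute.one_left b).sub_left hEb).eq, mul_assoc b]
    _ = 0 := sub_eq_zero.mpr h.eq
  have hD0 : D = 0 := calc
    D = E * D + (1 - E) * D := by noncomm_ring
    _ = 0 := by rw [hED.eq, hDE, hD, add_zero]
  exact sub_eq_zero.mp hD0

section
variable {𝕜 X : Type*} [NontriviallyNormedField 𝕜] [NormedAddCommGroup X] [NormedSpace 𝕜 X]

def closedInvariantSubspaces (S : Set (X →L[𝕜] X)) : Set (Submodule 𝕜 X) :=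
  {K | IsClosed (K : Set X) ∧ ∀ a ∈ S, ∀ x ∈ K, a x ∈ K}

def algLat (S : Set (X →L[𝕜] X)) : Set (X →L[𝕜] X) :=
  {b | ∀ K ∈ closedInvariantSubspaces S, ∀ x ∈ K, b x ∈ K}

variable {S : Set (X →L[𝕜] X)}

lemma subset_algLat : S ⊆ algLat S := fun a ha _ hK x hx => hK.2 a ha x hx

lemma ker_mem_closedInvariantSubspaces {T : X →L[𝕜] X} (hT : T ∈ Subalgebra.centralizer 𝕜 S) :
    T.ker ∈ closedInvariantSubspaces S := by
  refine ⟨T.isClosed_ker, fun a ha x hx => ?_⟩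
  rw [LinearMap.mem_ker, ContinuousLinearMap.coe_coe] at hx ⊢
  rw [← mul_apply_eq_comp, ← (Subalgebra.mem_centralizer_iff 𝕜).mp hT a ha,
    mul_apply_eq_comp, hx, map_zero]

lemma comap_mem_closedInvariantSubspaces {K : Submodule 𝕜 X}
    (hK : K ∈ closedInvariantSubspaces S) {u : X →L[𝕜] X} (hu : u ∈ Subalgebra.centralizer 𝕜 S) :
    K.comap (u : X →ₗ[𝕜] X) ∈ closedInvariantSubspaces S := by
  refine ⟨hK.1.preimage u.continuous, fun a ha x hx => ?_⟩
  change u (a x) ∈ K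
  rw [← mul_apply_eq_comp, ← (Subalgebra.mem_centralizer_iff 𝕜).mp hu a ha]
  exact hK.2 a ha _ hx

lemma mul_mul_mem_algLat {u v b : X →L[𝕜] X} (hu : u ∈ Subalgebra.centralizer 𝕜 S)
    (huv : u * v = 1) (hb : b ∈ algLat S) : u * b * v ∈ algLat S := by
  intro K hK x hx
  have hvx : v x ∈ K.comap (u : X →ₗ[𝕜] X) := by
    change u (v x) ∈ K
    rwa [← mul_apply_eq_comp, huv, one_apply_eq_self]
  exact hb _ (comap_mem_closedInvariantSubspaces hK hu) _ hvx

lemma commute_projectionL [CompleteSpace X] {K M : Submodule 𝕜 X}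
    (hK : K ∈ closedInvariantSubspaces S) (hM : M ∈ closedInvariantSubspaces S) (hKM : IsCompl K M)
    {c : X →L[𝕜] X} (hc : c ∈ algLat S) :
    Commute (K.projectionL M (Submodule.IsCompl.isTopCompl_of_isClosed hKM hK.1 hM.1)) c := by
  refine (ContinuousLinearMap.IsIdempotentElem.commute_iff
    (Submodule.isIdempotentElem_projectionL _)).mpr ⟨?_, ?_⟩ <;>
    rw [Module.End.mem_invtSubmodule_iff_forall_mem_of_mem]
  · rw [Submodule.range_projectionL]
    exact hc K hK
  · rw [Submodule.ker_projectionL]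
    exact hc M hM

end

section
variable {𝕜 X : Type*} [RCLike 𝕜] [NormedAddCommGroup X] [NormedSpace 𝕜 X]
  {S : Set (X →L[𝕜] X)}

lemma exp_smul_mul_exp_smul_neg [CompleteSpace X] (Q : X →L[𝕜] X) (t : 𝕜) :
    exp (t • Q) * exp (t • -Q) = 1 := by
  have hball (y : X →L[𝕜] X) : y ∈ Metric.eball 0 (expSeries 𝕜 (X →L[𝕜] X)).radius :=
    (expSeries_radius_eq_top 𝕜 (X →L[𝕜] X)).symm ▸ edist_lt_top _ _
  rw [smul_neg, ← exp_add_of_commute_of_mem_ball (Commute.refl (t • Q)).neg_right (hball _)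
    (hball _), add_neg_cancel, exp_zero]

lemma commutator_mem_algLat [CompleteSpace X] {Q b : X →L[𝕜] X}
    (hQ : Q ∈ Subalgebra.centralizer 𝕜 S) (hb : b ∈ algLat S) : Q * b - b * Q ∈ algLat S := by
  intro K hK x hx
  set g : 𝕜 → X := fun t => (exp (t • Q) * b * exp (t • -Q)) x
  have hexp (t : 𝕜) : exp (t • Q) ∈ Subalgebra.centralizer 𝕜 S :=
    (Subalgebra.mem_centralizer_iff 𝕜).mpr fun a ha =>
      (Commute.smul_right ((Subalgebra.mem_centralizer_iff 𝕜).mp hQ a ha) t).exp_right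
  have hgK (t : 𝕜) : g t ∈ K :=
    mul_mul_mem_algLat (hexp t) (exp_smul_mul_exp_smul_neg Q t) hb K hK x hx
  have hconj : HasDerivAt (fun t : 𝕜 => exp (t • Q) * b * exp (t • -Q)) (Q * b - b * Q) 0 := by
    refine (((hasDerivAt_exp_smul_const Q (0 : 𝕜)).mul_const b).mul
      (hasDerivAt_exp_smul_const (-Q) (0 : 𝕜))).congr_deriv ?_
    simp only [zero_smul, exp_zero, one_mul, mul_one, mul_neg]
    abel
  have hg : HasDerivAt g ((Q * b - b * Q) x) 0 := by
    have := hconj.clm_apply (hasDerivAt_const (0 : 𝕜) x)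
    rwa [map_zero, add_zero] at this
  have hderiv := range_deriv_subset_closure_span_image g dense_univ ⟨0, hg.deriv⟩
  exact hK.1.closure_subset_iff.mpr
    (Submodule.span_le.mpr (image_subset_iff.mpr fun t _ => hgK t)) hderiv

theorem commute_of_pow_succ_eq_zero [CompleteSpace X]
    (hS : ∀ K ∈ closedInvariantSubspaces S, ∃ M ∈ closedInvariantSubspaces S, IsCompl K M)
    {Q b : X →L[𝕜] X} (hQ : Q ∈ Subalgebra.centralizer 𝕜 S) (hb : b ∈ algLat S) {n : ℕ}
    (hQn : Q ^ (n + 1) = 0) : Commute Q b := by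
  induction n generalizing Q with
  | zero =>
    rw [zero_add, pow_one] at hQn
    exact hQn ▸ Commute.zero_left b
  | succ n ih =>
    have hker := ker_mem_closedInvariantSubspaces hQ
    obtain ⟨M, hM, hKM⟩ := hS _ hker
    set E := Q.ker.projectionL M (Submodule.IsCompl.isTopCompl_of_isClosed hKM hker.1 hM.1)
    have hE : E ∈ Subalgebra.centralizer 𝕜 S := (Subalgebra.mem_centralizer_iff 𝕜).mpr
      fun a ha => (commute_projectionL hker hM hKM (subset_algLat ha)).symm.eq
    have hQE : Q * E = 0 := by
      ext x
      exact Submodule.projectionL_apply_mem (p := (Q : X →ₗ[𝕜] X).ker) _ x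
    have hEQ : E * Q ^ (n + 1) = Q ^ (n + 1) := by
      ext x
      refine Submodule.projectionL_apply_left _ ⟨_, ?_⟩
      change (Q * Q ^ (n + 1)) x = 0
      rw [← pow_succ', hQn, zero_apply]
    have hQ' : ((1 - E) * Q) ^ (n + 1) = 0 := by
      rw [mul_pow_succ_of_mul_eq_self (by rw [mul_sub, mul_one, hQE, sub_zero]), sub_mul, one_mul,
        hEQ, sub_self]
    exact commute_of_commute_one_sub_mul hQE (commute_projectionL hker hM hKM hb)
      (commute_projectionL hker hM hKM (commutator_mem_algLat hQ hb))
      (ih (Subalgebra.mul_mem _ (Subalgebra.sub_mem _ (Subalgebra.one_mem _) hE) hQ) hQ')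

end

theorem stmt8_general {X : Type*} [NormedAddCommGroup X] [NormedSpace ℂ X] [CompleteSpace X]
    (A : Subalgebra ℂ (X →L[ℂ] X))
    (hCISL : ∀ K : Submodule ℂ X, IsClosed (K : Set X) → (∀ a ∈ A, ∀ x ∈ K, a x ∈ K) →
      ∃ Kc : Submodule ℂ X, IsClosed (Kc : Set X) ∧ (∀ a ∈ A, ∀ x ∈ Kc, a x ∈ Kc) ∧
        IsCompl K Kc)
    (Q : X →L[ℂ] X) (hQA : ∀ a ∈ A, Q * a = a * Q) (hQ2 : IsNilpotent Q)
    (b : X →L[ℂ] X)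
    (hb : ∀ K : Submodule ℂ X, IsClosed (K : Set X) → (∀ a ∈ A, ∀ x ∈ K, a x ∈ K) →
      ∀ x ∈ K, b x ∈ K) :
    Q * b = b * Q := by
  obtain ⟨m, hm⟩ := hQ2
  have hS : ∀ K ∈ closedInvariantSubspaces (A : Set (X →L[ℂ] X)),
      ∃ M ∈ closedInvariantSubspaces (A : Set (X →L[ℂ] X)), IsCompl K M := fun K hK =>
    let ⟨M, hMc, hMA, hKM⟩ := hCISL K hK.1 hK.2
    ⟨M, ⟨hMc, hMA⟩, hKM⟩
  have hQ : Q ∈ Subalgebra.centralizer ℂ (A : Set (X →L[ℂ] X)) :=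
    (Subalgebra.mem_centralizer_iff ℂ).mpr fun a ha => (hQA a ha).symm
  have hQm : Q ^ (m + 1) = 0 := by rw [pow_succ, hm, zero_mul]
  exact (commute_of_pow_succ_eq_zero hS hQ (fun K hK => hb K hK.1 hK.2) hQm).eq

/-- If `A` is a strongly closed unital algebra with complemented invariant
subspace lattice and `Q ∈ A'` satisfies nilpotent (`Q^m = 0` for some `m`), then `Q` commutes with every operator in
`algLat A`. -/
theorem stmt8 {X : Type*} [NormedAddCommGroup X] [NormedSpace ℂ X] [CompleteSpace X]
    (A : Subalgebra ℂ (X →L[ℂ] X))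
    (hA : IsClosed ((fun a : X →L[ℂ] X => (a : X → X)) '' (A : Set (X →L[ℂ] X))))
    (hCISL : ∀ K : Submodule ℂ X, IsClosed (K : Set X) → (∀ a ∈ A, ∀ x ∈ K, a x ∈ K) →
      ∃ Kc : Submodule ℂ X, IsClosed (Kc : Set X) ∧ (∀ a ∈ A, ∀ x ∈ Kc, a x ∈ Kc) ∧
        IsCompl K Kc)
    (Q : X →L[ℂ] X) (hQA : ∀ a ∈ A, Q * a = a * Q) (hQ2 : IsNilpotent Q)
    (b : X →L[ℂ] X)
    (hb : ∀ K : Submodule ℂ X, IsClosed (K : Set X) → (∀ a ∈ A, ∀ x ∈ K, a x ∈ K) →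
      ∀ x ∈ K, b x ∈ K) :
    Q * b = b * Q :=
  stmt8_general A hCISL Q hQA hQ2 b hb
end

section
/- Let (Ω, Σ) be a measurable space and μ₁, ..., μ_k finite mutually absolutely continuous measures on Σ. Then for every ε > 0 there exists ρ ∈ Σ with μ_l(Ω \ ρ) < ε for all 1 ≤ l ≤ k, and a constant n ∈ ℕ, such that for every measurable σ ⊆ ρ and all 1 ≤ i, j ≤ k one has μᵢ(σ)/n ≤ μⱼ(σ) ≤ n·μᵢ(σ). -/
/-!
Compare the measures through the pairwise Radon–Nikodym derivatives `hᵢⱼ = dμᵢ/dμⱼ`, which by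
mutual absolute continuity are positive and finite almost everywhere. On the set where every
`hᵢⱼ` lies in `[1/n, n]`, `μᵢ σ = ∫_σ hᵢⱼ dμⱼ ≤ n μⱼ σ`. These sets increase with `n` and exhaust
`Ω` up to a null set, so by continuity from above of the finite measures `μₗ` their complements
eventually have measure `< ε`.
-/

open MeasureTheory Filter Set
open scoped ENNReal Topology

namespace MeasureTheory

variable {Ω ι : Type*}

def truncationSet (f : ι → Ω → ℝ≥0∞) (n : ℕ) : Set Ω :=
  ⋂ i, f i ⁻¹' Icc (n : ℝ≥0∞)⁻¹ n

section truncationSet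

variable {f : ι → Ω → ℝ≥0∞}

lemma le_of_mem_truncationSet {n : ℕ} {x : Ω} (hx : x ∈ truncationSet f n) (i : ι) :
    f i x ≤ n :=
  (mem_iInter.1 hx i).2

lemma measurableSet_truncationSet [Countable ι] [MeasurableSpace Ω]
    (hf : ∀ i, Measurable (f i)) (n : ℕ) : MeasurableSet (truncationSet f n) :=
  .iInter fun i => hf i measurableSet_Icc

lemma monotone_truncationSet : Monotone (truncationSet f) := fun _ _ hmn =>
  iInter_mono fun _ => preimage_mono <|
    Icc_subset_Icc (ENNReal.inv_le_inv.2 (by exact_mod_cast hmn)) (by exact_mod_cast hmn)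

lemma eventually_mem_truncationSet [Finite ι] {x : Ω} (hx : ∀ i, f i x ≠ 0 ∧ f i x ≠ ∞) :
    ∀ᶠ n in atTop, x ∈ truncationSet f n := by
  simp only [truncationSet, mem_iInter, mem_preimage, mem_Icc, eventually_all]
  intro i
  exact (ENNReal.tendsto_inv_nat_nhds_zero.eventually_le_const (pos_iff_ne_zero.2 (hx i).1)).and
    (ENNReal.tendsto_nat_nhds_top.eventually_const_le (hx i).2.lt_top)

lemma tendsto_measure_compl_truncationSet [Finite ι] [MeasurableSpace Ω] {μ : Measure Ω}
    [IsFiniteMeasure μ] (hf : ∀ i, Measurable (f i)) (hae : ∀ᵐ x ∂μ, ∀ i, f i x ≠ 0 ∧ f i x ≠ ∞) :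
    Tendsto (fun n => μ (truncationSet f n)ᶜ) atTop (𝓝 0) := by
  have hnull : μ (⋂ n, (truncationSet f n)ᶜ) = 0 := by
    refine measure_eq_zero_iff_ae_notMem.2 ?_
    filter_upwards [hae] with x hx
    simpa using (eventually_mem_truncationSet hx).exists
  rw [← hnull]
  exact tendsto_measure_iInter_atTop
    (fun n => (measurableSet_truncationSet hf n).compl.nullMeasurableSet)
    (fun _ _ hmn => compl_subset_compl.2 (monotone_truncationSet hmn)) ⟨0, measure_ne_top μ _⟩

end truncationSet

variable [MeasurableSpace Ω]

lemma Measure.le_mul_of_forall_rnDeriv_le {μ ν : Measure Ω} [μ.HaveLebesgueDecomposition ν]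
    [SFinite ν] (hμν : μ ≪ ν) {s : Set Ω} {c : ℝ≥0∞} (h : ∀ x ∈ s, μ.rnDeriv ν x ≤ c) :
    μ s ≤ c * ν s :=
  calc μ s = ∫⁻ x in s, μ.rnDeriv ν x ∂ν := (Measure.setLIntegral_rnDeriv hμν s).symm
    _ ≤ ∫⁻ _ in s, c ∂ν := setLIntegral_mono measurable_const h
    _ = c * ν s := setLIntegral_const s c

lemma Measure.ae_rnDeriv_ne_zero_ne_top {μ : ι → Measure Ω} [Countable ι]
    [∀ i, SigmaFinite (μ i)] (hac : ∀ i j, μ i ≪ μ j) (l : ι) :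
    ∀ᵐ x ∂μ l, ∀ p : ι × ι, (μ p.1).rnDeriv (μ p.2) x ≠ 0 ∧ (μ p.1).rnDeriv (μ p.2) x ≠ ∞ := by
  rw [ae_all_iff]
  rintro ⟨i, j⟩
  refine hac l j ?_
  filter_upwards [Measure.rnDeriv_pos' (hac j i), Measure.rnDeriv_lt_top (μ i) (μ j)]
    with x hpos htop using ⟨hpos.ne', htop.ne⟩

end MeasureTheory

/-- For finite mutually absolutely continuous measures `μ₁, …, μ_k` and any
`ε > 0` there are a measurable set `ρ` with `μ_l(ρᶜ) < ε` for all `l` and a constant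
`n ≥ 1` such that `μᵢ(σ)/n ≤ μⱼ(σ) ≤ n·μᵢ(σ)` for every measurable `σ ⊆ ρ` and all
`i, j`. -/
theorem stmt11 {Ω : Type*} [MeasurableSpace Ω] (k : ℕ) (μ : Fin k → Measure Ω)
    [∀ l, IsFiniteMeasure (μ l)] (hac : ∀ i j, μ i ≪ μ j)
    (ε : ENNReal) (hε : 0 < ε) :
    ∃ ρ : Set Ω, MeasurableSet ρ ∧ (∀ l, μ l ρᶜ < ε) ∧
      ∃ n : ℕ, 0 < n ∧ ∀ σ : Set Ω, MeasurableSet σ → σ ⊆ ρ →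
        ∀ i j, μ i σ / n ≤ μ j σ ∧ μ j σ ≤ n * μ i σ := by
  set h : Fin k × Fin k → Ω → ℝ≥0∞ := fun p => (μ p.1).rnDeriv (μ p.2)
  have hm : ∀ p, Measurable (h p) := fun _ => Measure.measurable_rnDeriv _ _
  have hsmall : ∀ l, ∀ᶠ n in atTop, μ l (truncationSet h n)ᶜ < ε := fun l =>
    (tendsto_measure_compl_truncationSet hm
      (Measure.ae_rnDeriv_ne_zero_ne_top hac l)).eventually_lt_const hε
  obtain ⟨n, hn, hρ⟩ := ((eventually_gt_atTop 0).and (eventually_all.2 hsmall)).exists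
  refine ⟨truncationSet h n, measurableSet_truncationSet hm n, hρ, n, hn,
    fun σ _ hσ i j => ⟨ENNReal.div_le_of_le_mul' ?_, ?_⟩⟩
  · exact Measure.le_mul_of_forall_rnDeriv_le (hac i j) fun x hx =>
      le_of_mem_truncationSet (hσ hx) (i, j)
  · exact Measure.le_mul_of_forall_rnDeriv_le (hac j i) fun x hx =>
      le_of_mem_truncationSet (hσ hx) (j, i)
end
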